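/- Let p be a prime and let G be a finite semi-extraspecial p-group with |G : Z(G)| = p^{2a} possessing an automorphism σ of order p^{2a} − 1. Then all elements of G outside Z(G) have the same order: for all x, y ∈ G with x ∉ Z(G) and y ∉ Z(G), the order of x equals the order of y. -/

import Mathlib

/-- A finite `p`-group `G` is extraspecial if `|Z(G)| = p` and `Z(G) = [G,G]`. -/
def IsExtraspecial (p : ℕ) (G : Type*) [Group G] : Prop :=
  Nat.card (Subgroup.center G) = p ∧ Subgroup.center G = commutator G

/-- A finite `p`-group `G` is semi-extraspecial if `G/N` is extraspecial for every
maximal subgroup `N` of the center `Z(G)`. -/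
def IsSemiExtraspecial (p : ℕ) (G : Type*) [Group G] : Prop :=
  ∀ (N : Subgroup G) [N.Normal], N ≤ Subgroup.center G →
    IsCoatom (N.subgroupOf (Subgroup.center G)) →
    IsExtraspecial p (G ⧸ N)

/-!
By the Camina property every element of a coset `x Z(G)` with `x ∉ Z(G)` is conjugate to `x`,
so element orders are constant on the nontrivial cosets of `Z(G)`; it remains to see that `σ`
permutes these cosets transitively.

`V = G/Z(G)` is elementary abelian of order `p^n`, and `σ` induces an `𝔽_p`-linear map `f` of
`V`. An automorphism acting trivially on `G/Z(G)` fixes `Z(G) = [G,G]` pointwise, so its `p`-th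
power is trivial; as `p^n - 1` is prime to `p`, `f` has the same order `p^n - 1` as `σ`. Then
`𝔽_p[f]`, which has at most `|V|` elements, consists of `0` and the `p^n - 1` powers of `f`; so
evaluation at a nonzero vector is a bijection `𝔽_p[f] → V`, and the powers of `f` act
transitively on `V \ {0}`.
-/

open Subgroup
open scoped commutatorElement

section Commutators

variable {G : Type*} [Group G]

theorem Subgroup.normal_of_le_center {N : Subgroup G} (h : N ≤ center G) : N.Normal :=
  ⟨fun n hn g => by rwa [mem_center_iff.mp (h hn) g, mul_inv_cancel_right]⟩

theorem commutatorElement_pow_left_of_commute {g h : G} (hc : Commute g ⁅g, h⁆) (n : ℕ) :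
    ⁅g ^ n, h⁆ = ⁅g, h⁆ ^ n := by
  induction n with
  | zero => simp
  | succ n ih =>
    rw [pow_succ', commutatorElement_mul_left_eq_conj_mul, ih, (hc.pow_right n).eq,
      mul_inv_cancel_right, pow_succ]

theorem commutatorElement_mul_left_of_mem_center {a b c : G} (h : ⁅b, c⁆ ∈ center G) :
    ⁅a * b, c⁆ = ⁅a, c⁆ * ⁅b, c⁆ := by
  rw [commutatorElement_mul_left_eq_conj_mul, mem_center_iff.mp h a, mul_inv_cancel_right,
    mem_center_iff.mp h]

theorem commutatorElement_mul_mul_of_mem_center {z w : G} (hz : z ∈ center G)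
    (hw : w ∈ center G) (a b : G) : ⁅a * z, b * w⁆ = ⁅a, b⁆ := by
  have hz' : ⁅z, b * w⁆ = 1 :=
    commutatorElement_eq_one_iff_mul_comm.mpr (mem_center_iff.mp hz _).symm
  have hw' : ⁅a, w⁆ = 1 := commutatorElement_eq_one_iff_mul_comm.mpr (mem_center_iff.mp hw _)
  rw [commutatorElement_mul_left_eq_conj_mul, hz', mul_one, mul_inv_cancel, one_mul,
    commutatorElement_mul_right_eq_mul_conj, hw', mul_one, mul_inv_cancel_right]

end Commutators

section Extraspecial

variable {p : ℕ} {G : Type*} [Group G]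

theorem IsExtraspecial.pow_mem_center (hG : IsExtraspecial p G) (g : G) : g ^ p ∈ center G := by
  refine mem_center_iff.mpr fun h => ?_
  have hc : ⁅g, h⁆ ∈ center G := hG.2 ▸ commutator_mem_commutator (mem_top g) (mem_top h)
  have hcp : ⁅g, h⁆ ^ p = 1 := by
    simpa [hG.1] using congrArg Subtype.val (pow_card_eq_one' (G := center G) (x := ⟨_, hc⟩))
  have := commutatorElement_pow_left_of_commute (mem_center_iff.mp hc g) p
  rw [hcp, commutatorElement_eq_one_iff_mul_comm] at this
  exact this.symm

variable {N : Subgroup G} [N.Normal]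

theorem IsExtraspecial.map_mk'_center (hp : p.Prime) (hQ : IsExtraspecial p (G ⧸ N))
    (hZN : ¬ center G ≤ N) :
    (center G).map (QuotientGroup.mk' N) = center (G ⧸ N) := by
  have hle : (center G).map (QuotientGroup.mk' N) ≤ center (G ⧸ N) := by
    rintro _ ⟨z, hz, rfl⟩
    refine mem_center_iff.mpr fun q => ?_
    obtain ⟨g, rfl⟩ := QuotientGroup.mk'_surjective N q
    rw [← map_mul, ← map_mul, mem_center_iff.mp hz g]
  have hne : (center G).map (QuotientGroup.mk' N) ≠ ⊥ := by
    rwa [Ne, Subgroup.map_eq_bot_iff, QuotientGroup.ker_mk']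
  have : Finite (center (G ⧸ N)) := Nat.finite_of_card_ne_zero (hQ.1 ▸ hp.ne_zero)
  refine eq_of_le_of_card_ge hle (hQ.1.trans_le ?_)
  rcases (Nat.dvd_prime hp).mp (hQ.1 ▸ card_dvd_of_le hle) with h | h
  · exact absurd (card_eq_one.mp h) hne
  · exact h.ge

theorem IsExtraspecial.comap_mk'_center (hp : p.Prime) (hQ : IsExtraspecial p (G ⧸ N))
    (hN : N ≤ center G) (hZN : ¬ center G ≤ N) :
    (center (G ⧸ N)).comap (QuotientGroup.mk' N) = center G := by
  rw [← hQ.map_mk'_center hp hZN, comap_map_eq, QuotientGroup.ker_mk', sup_eq_left.mpr hN]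

theorem IsExtraspecial.commutatorElement_mem_center (hp : p.Prime) (hQ : IsExtraspecial p (G ⧸ N))
    (hN : N ≤ center G) (hZN : ¬ center G ≤ N) (g h : G) : ⁅g, h⁆ ∈ center G := by
  rw [← hQ.comap_mk'_center hp hN hZN, mem_comap, map_commutatorElement, hQ.2]
  exact commutator_mem_commutator (mem_top _) (mem_top _)

theorem IsExtraspecial.pow_mem_center_of_quotient (hp : p.Prime) (hQ : IsExtraspecial p (G ⧸ N))
    (hN : N ≤ center G) (hZN : ¬ center G ≤ N) (g : G) : g ^ p ∈ center G := by
  rw [← hQ.comap_mk'_center hp hN hZN, mem_comap, map_pow]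
  exact hQ.pow_mem_center _

theorem IsExtraspecial.mem_center_of_forall_commutatorElement_mem (hp : p.Prime)
    (hQ : IsExtraspecial p (G ⧸ N)) (hN : N ≤ center G) (hZN : ¬ center G ≤ N) {x : G}
    (hx : ∀ g : G, ⁅g, x⁆ ∈ N) : x ∈ center G := by
  rw [← hQ.comap_mk'_center hp hN hZN, mem_comap, mem_center_iff]
  intro q
  obtain ⟨g, rfl⟩ := QuotientGroup.mk'_surjective N q
  rw [← commutatorElement_eq_one_iff_mul_comm, ← map_commutatorElement]
  exact (QuotientGroup.eq_one_iff _).mpr (hx g)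

end Extraspecial

namespace IsSemiExtraspecial

variable {p : ℕ} {G : Type*} [Group G] [Finite G]

theorem exists_extraspecial_quotient (hG : IsSemiExtraspecial p G) {L : Subgroup (center G)}
    (hL : L ≠ ⊤) : ∃ (N : Subgroup G) (_ : N.Normal), N ≤ center G ∧ ¬ center G ≤ N ∧
      L.map (center G).subtype ≤ N ∧ IsExtraspecial p (G ⧸ N) := by
  obtain ⟨M, hM, hLM⟩ := (eq_top_or_exists_le_coatom L).resolve_left hL
  have hMN : (M.map (center G).subtype).subgroupOf (center G) = M :=
    comap_map_eq_self_of_injective (center G).subtype_injective M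
  have hN : M.map (center G).subtype ≤ center G := map_subtype_le M
  have := normal_of_le_center hN
  refine ⟨_, this, hN, fun hZN => hM.1 ?_, map_mono hLM, hG _ hN (by rwa [hMN])⟩
  rwa [← hMN, subgroupOf_eq_top]

variable [Nontrivial (center G)]

theorem exists_extraspecial_quotient_of_nontrivial (hG : IsSemiExtraspecial p G) :
    ∃ (N : Subgroup G) (_ : N.Normal), N ≤ center G ∧ ¬ center G ≤ N ∧
      IsExtraspecial p (G ⧸ N) := by
  obtain ⟨N, _, hN, hZN, -, hQ⟩ := hG.exists_extraspecial_quotient (L := ⊥) bot_ne_top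
  exact ⟨N, inferInstance, hN, hZN, hQ⟩

theorem commutatorElement_mem_center (hG : IsSemiExtraspecial p G) (hp : p.Prime) (g h : G) :
    ⁅g, h⁆ ∈ center G := by
  obtain ⟨N, _, hN, hZN, hQ⟩ := hG.exists_extraspecial_quotient_of_nontrivial
  exact hQ.commutatorElement_mem_center hp hN hZN g h

theorem pow_mem_center (hG : IsSemiExtraspecial p G) (hp : p.Prime) (g : G) :
    g ^ p ∈ center G := by
  obtain ⟨N, _, hN, hZN, hQ⟩ := hG.exists_extraspecial_quotient_of_nontrivial
  exact hQ.pow_mem_center_of_quotient hp hN hZN g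

theorem exists_not_mem_center (hG : IsSemiExtraspecial p G) (hp : p.Prime) :
    ∃ x : G, x ∉ center G := by
  obtain ⟨N, _, hN, hZN, hQ⟩ := hG.exists_extraspecial_quotient_of_nontrivial
  refine SetLike.exists_not_mem_of_ne_top _ fun hZ => hp.one_lt.ne' ?_
  have hQZ : center (G ⧸ N) = ⊤ := by
    rw [← hQ.map_mk'_center hp hZN, hZ, map_top_of_surjective _ (QuotientGroup.mk'_surjective N)]
  rw [← hQ.1, card_eq_one, hQ.2, commutator_eq_bot_iff_center_eq_top, hQZ]

theorem exists_commutatorElement_eq (hG : IsSemiExtraspecial p G) (hp : p.Prime) {x z : G}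
    (hx : x ∉ center G) (hz : z ∈ center G) : ∃ g : G, ⁅g, x⁆ = z := by
  -- If `g ↦ ⁅g, x⁆` missed `z`, then modulo a maximal subgroup `N` of `Z(G)` containing its
  -- image, `x` would be central in the extraspecial group `G/N`.
  let φ : G →* center G :=
    MonoidHom.mk' (fun g => ⟨⁅g, x⁆, hG.commutatorElement_mem_center hp g x⟩) fun _ b =>
      Subtype.ext <| commutatorElement_mul_left_of_mem_center <|
        hG.commutatorElement_mem_center hp b x
  suffices hφ : φ.range = ⊤ by
    obtain ⟨g, hg⟩ := hφ ▸ mem_top (⟨z, hz⟩ : center G)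
    exact ⟨g, congrArg Subtype.val hg⟩
  by_contra hφ
  obtain ⟨N, _, hN, hZN, hφN, hQ⟩ := hG.exists_extraspecial_quotient hφ
  exact hx (hQ.mem_center_of_forall_commutatorElement_mem hp hN hZN fun g =>
    hφN ⟨φ g, ⟨g, rfl⟩, rfl⟩)

theorem orderOf_mul_of_mem_center (hG : IsSemiExtraspecial p G) (hp : p.Prime) {x z : G}
    (hx : x ∉ center G) (hz : z ∈ center G) : orderOf (x * z) = orderOf x := by
  obtain ⟨g, rfl⟩ := hG.exists_commutatorElement_eq hp hx hz
  refine (SemiconjBy.orderOf_eq g ?_).symm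
  rw [SemiconjBy, mem_center_iff.mp hz x, commutatorElement_def]
  group

theorem pow_eq_one_of_mem_center (hG : IsSemiExtraspecial p G) (hp : p.Prime) {z : G}
    (hz : z ∈ center G) : z ^ p = 1 := by
  obtain ⟨x, hx⟩ := hG.exists_not_mem_center hp
  obtain ⟨g, rfl⟩ := hG.exists_commutatorElement_eq hp hx hz
  rw [← commutatorElement_pow_left_of_commute (mem_center_iff.mp hz g : Commute g ⁅g, x⁆),
    commutatorElement_eq_one_iff_mul_comm]
  exact (mem_center_iff.mp (hG.pow_mem_center hp g) x).symm

theorem apply_eq_self_of_mem_center (hG : IsSemiExtraspecial p G) (hp : p.Prime) {τ : MulAut G}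
    (hτ : ∀ g : G, (τ g : G ⧸ center G) = g) {z : G} (hz : z ∈ center G) : τ z = z := by
  obtain ⟨x, hx⟩ := hG.exists_not_mem_center hp
  obtain ⟨g, rfl⟩ := hG.exists_commutatorElement_eq hp hx hz
  rw [map_commutatorElement, ← mul_inv_cancel_left g (τ g), ← mul_inv_cancel_left x (τ x),
    commutatorElement_mul_mul_of_mem_center (QuotientGroup.eq.mp (hτ g).symm)
      (QuotientGroup.eq.mp (hτ x).symm)]

theorem pow_eq_one_of_forall_mk_apply_eq (hG : IsSemiExtraspecial p G) (hp : p.Prime)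
    {τ : MulAut G} (hτ : ∀ g : G, (τ g : G ⧸ center G) = g) : τ ^ p = 1 := by
  ext g
  obtain ⟨u, hu, hτg⟩ : ∃ u ∈ center G, τ g = g * u :=
    ⟨_, QuotientGroup.eq.mp (hτ g).symm, (mul_inv_cancel_left g _).symm⟩
  have hpow : ∀ k : ℕ, (τ ^ k) g = g * u ^ k := by
    intro k
    induction k with
    | zero => simp
    | succ k ih =>
      rw [pow_succ', MulAut.mul_apply, ih, map_mul, map_pow,
        hG.apply_eq_self_of_mem_center hp hτ hu, hτg, mul_assoc, ← pow_succ']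
  rw [hpow, hG.pow_eq_one_of_mem_center hp hu, mul_one]
  rfl

end IsSemiExtraspecial

theorem orderOf_map_eq_of_pow_eq_one_of_map_eq_one {M N : Type*} [Monoid M] [Monoid N]
    (φ : M →* N) {σ : M} {p : ℕ} (hσ : (orderOf σ).Coprime p)
    (hker : ∀ τ, φ τ = 1 → τ ^ p = 1) : orderOf (φ σ) = orderOf σ := by
  refine Nat.dvd_antisymm (orderOf_map_dvd φ σ) (hσ.dvd_of_dvd_mul_right ?_)
  apply orderOf_dvd_of_pow_eq_one
  rw [pow_mul]
  exact hker _ (by rw [map_pow, pow_orderOf_eq_one])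

instance LinearMap.finite_of_finite {R M N : Type*} [Semiring R] [AddCommMonoid M]
    [AddCommMonoid N] [Module R M] [Module R N] [Finite M] [Finite N] : Finite (M →ₗ[R] N) :=
  .of_injective _ DFunLike.coe_injective

theorem ncard_insert_zero_powers {M : Type*} [MonoidWithZero M] [Nontrivial M] {x : M}
    (hx : IsOfFinOrder x) : (insert 0 (Submonoid.powers x : Set M)).ncard = orderOf x + 1 := by
  have h0 : (0 : M) ∉ (Submonoid.powers x : Set M) := by
    rintro ⟨k, hk⟩
    exact (hx.isUnit.pow k).ne_zero hk
  have hfin : (Submonoid.powers x : Set M).Finite := hx.finite_powers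
  rw [Set.ncard_insert_of_notMem h0 hfin, ← Nat.card_coe_set_eq]
  exact congrArg (· + 1) ((Nat.card_congr (finEquivPowers hx).symm).trans (Nat.card_fin _))

section Singer

variable {K V : Type*} [Field K] [Finite K] [AddCommGroup V] [Module K V] [Finite V]

theorem Module.End.natCard_adjoin_le (f : Module.End K V) :
    Nat.card (Algebra.adjoin K {f}) ≤ Nat.card V := by
  classical
  -- By Cayley–Hamilton, `K[f]` is spanned by `f ^ i` for `i < dim V`.
  change Nat.card (Subalgebra.toSubmodule (Algebra.adjoin K {f})) ≤ _
  rw [← Submodule.span_range_natDegree_eq_adjoin f.charpoly_monic f.aeval_self_charpoly,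
    Module.natCard_eq_pow_finrank (K := K), Module.natCard_eq_pow_finrank (K := K) (V := V)]
  gcongr
  · exact Nat.card_pos
  calc _ ≤ _ := finrank_span_finset_le_card _
    _ ≤ _ := Finset.card_image_le
    _ = _ := by rw [Finset.card_range, f.charpoly_natDegree]

theorem Module.End.adjoin_eq_insert_zero_powers [Nontrivial V] {f : Module.End K V}
    (hf : orderOf f = Nat.card V - 1) :
    (Algebra.adjoin K {f} : Set (Module.End K V)) =
      insert 0 (Submonoid.powers f : Set (Module.End K V)) := by
  have : 1 < Nat.card V := Finite.one_lt_card
  have hfin : IsOfFinOrder f := orderOf_pos_iff.mp (by omega)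
  refine (Set.eq_of_subset_of_ncard_le ?_ ?_).symm
  · rintro _ (rfl | ⟨k, rfl⟩)
    · exact zero_mem _
    · exact pow_mem (Algebra.self_mem_adjoin_singleton K f) k
  · calc (Algebra.adjoin K {f} : Set (Module.End K V)).ncard
          = Nat.card (Algebra.adjoin K {f}) := (Nat.card_coe_set_eq _).symm
      _ ≤ Nat.card V := natCard_adjoin_le f
      _ = _ := by rw [ncard_insert_zero_powers hfin]; omega

theorem Module.End.exists_pow_apply_eq {f : Module.End K V} (hf : orderOf f = Nat.card V - 1)
    {v w : V} (hv : v ≠ 0) (hw : w ≠ 0) : ∃ k : ℕ, (f ^ k) v = w := by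
  have : Nontrivial V := ⟨v, 0, hv⟩
  have : 1 < Nat.card V := Finite.one_lt_card
  have hfin : IsOfFinOrder f := orderOf_pos_iff.mp (by omega)
  set A : Set (Module.End K V) := ↑(Algebra.adjoin K {f})
  have hA : A = insert 0 (Submonoid.powers f : Set (Module.End K V)) :=
    adjoin_eq_insert_zero_powers hf
  have hinj : A.InjOn (fun a => a v) := by
    intro a ha b hb hab
    by_contra hne
    have hsub : a - b ∈ A := sub_mem (H := Algebra.adjoin K {f}) ha hb
    rw [hA] at hsub
    obtain ⟨k, hk⟩ := hsub.resolve_left (sub_ne_zero.mpr hne)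
    have hunit : IsUnit (f ^ k) := hfin.isUnit.pow k
    refine hv ((Module.End.isUnit_iff _).mp hunit |>.injective ?_)
    simp only [hk, LinearMap.sub_apply, map_zero]
    exact sub_eq_zero.mpr hab
  have hsurj : (fun a => a v) '' A = Set.univ := by
    apply Set.eq_of_subset_of_ncard_le (Set.subset_univ _)
    rw [hinj.ncard_image, hA, ncard_insert_zero_powers hfin, Set.ncard_univ]
    omega
  obtain ⟨a, ha, rfl⟩ := hsurj.symm ▸ Set.mem_univ w
  rw [hA] at ha
  obtain ⟨k, rfl⟩ := ha.resolve_left (by rintro rfl; exact hw rfl)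
  exact ⟨k, rfl⟩

end Singer

section QuotientCenter

open scoped IsMulCommutative

variable (p : ℕ) {G : Type*} [Group G] [IsMulCommutative (G ⧸ center G)]
  [Module (ZMod p) (Additive (G ⧸ center G))]

def MulAut.toEndQuotientCenter : MulAut G →* Module.End (ZMod p) (Additive (G ⧸ center G)) where
  toFun τ := (QuotientGroup.map _ _ τ.toMonoidHom
    (centerCharacteristic.fixed τ).ge).toAdditive.toZModLinearMap p
  map_one' := by
    refine LinearMap.ext fun v => ?_
    induction v using QuotientGroup.induction_on
    rfl
  map_mul' _ _ := by
    refine LinearMap.ext fun v => ?_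
    induction v using QuotientGroup.induction_on
    rfl

theorem MulAut.toEndQuotientCenter_apply (τ : MulAut G) (g : G) :
    toEndQuotientCenter p τ (Additive.ofMul (g : G ⧸ center G)) =
      Additive.ofMul (τ g : G ⧸ center G) :=
  rfl

end QuotientCenter

open scoped IsMulCommutative in
theorem IsSemiExtraspecial.exists_pow_apply_mk_eq {p : ℕ} {G : Type*} [Group G] [Finite G]
    [Nontrivial (center G)] (hG : IsSemiExtraspecial p G) (hp : p.Prime) {n : ℕ}
    (hindex : (center G).index = p ^ n) {σ : MulAut G} (hσ : orderOf σ = p ^ n - 1) {x y : G}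
    (hx : x ∉ center G) (hy : y ∉ center G) : ∃ k : ℕ, ((σ ^ k) x : G ⧸ center G) = y := by
  have : Fact p.Prime := ⟨hp⟩
  have : IsMulCommutative (G ⧸ center G) := Normal.quotient_commutative_iff_commutator_le.mpr
    (commutator_le.mpr fun g _ h _ => hG.commutatorElement_mem_center hp g h)
  have : Module (ZMod p) (Additive (G ⧸ center G)) := AddCommGroup.zmodModule fun v => by
    induction v using QuotientGroup.induction_on with
    | H g => exact (QuotientGroup.eq_one_iff _).mpr (hG.pow_mem_center hp g)
  let φ := MulAut.toEndQuotientCenter p (G := G)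
  have hn : n ≠ 0 := by
    rintro rfl
    exact hx (index_eq_one.mp hindex ▸ mem_top x)
  have hcop : (orderOf σ).Coprime p := by
    rw [hσ]
    exact ((Nat.coprime_self_sub_left (Nat.one_le_pow _ _ hp.pos)).mpr
      (Nat.coprime_one_left _)).coprime_dvd_right (dvd_pow_self p hn)
  have hker : ∀ τ, φ τ = 1 → τ ^ p = 1 := fun τ hτ =>
    hG.pow_eq_one_of_forall_mk_apply_eq hp fun g => Additive.ofMul.injective (by
      rw [← MulAut.toEndQuotientCenter_apply p, hτ, Module.End.one_apply])
  have hf : orderOf (φ σ) = Nat.card (Additive (G ⧸ center G)) - 1 := by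
    rw [orderOf_map_eq_of_pow_eq_one_of_map_eq_one φ hcop hker, hσ, ← hindex, index_eq_card]
    rfl
  obtain ⟨k, hk⟩ := Module.End.exists_pow_apply_eq hf
    (v := Additive.ofMul (x : G ⧸ center G)) (w := Additive.ofMul (y : G ⧸ center G))
    (by simpa [QuotientGroup.eq_one_iff] using hx) (by simpa [QuotientGroup.eq_one_iff] using hy)
  exact ⟨k, by rwa [← map_pow, MulAut.toEndQuotientCenter_apply] at hk⟩

/-- Let `G` be a finite semi-extraspecial `p`-group with `|G : Z(G)| = p^(2a)` possessing
an automorphism of order `p^(2a) - 1`. Then all elements of `G` outside `Z(G)` have the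
same order. -/
theorem stmt_15 (p a : ℕ) (hp : p.Prime) (G : Type*) [Group G] [Finite G]
    (hpG : IsPGroup p G) (hses : IsSemiExtraspecial p G)
    (hindex : (Subgroup.center G).index = p ^ (2 * a))
    (σ : MulAut G) (hσ : orderOf σ = p ^ (2 * a) - 1) :
    ∀ x y : G, x ∉ Subgroup.center G → y ∉ Subgroup.center G → orderOf x = orderOf y := by
  intro x y hx hy
  have : Fact p.Prime := ⟨hp⟩
  have : Nontrivial G := nontrivial_of_ne x 1 fun h => hx (h ▸ one_mem _)
  have := hpG.center_nontrivial
  obtain ⟨k, hk⟩ := hses.exists_pow_apply_mk_eq hp hindex hσ hx hy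
  obtain ⟨z, hz, rfl⟩ : ∃ z ∈ center G, y = (σ ^ k) x * z :=
    ⟨_, QuotientGroup.eq.mp hk, (mul_inv_cancel_left _ _).symm⟩
  have hσx : (σ ^ k) x ∉ center G := fun h =>
    hy (by rw [← QuotientGroup.eq_one_iff, ← hk, QuotientGroup.eq_one_iff]; exact h)
  rw [hses.orderOf_mul_of_mem_center hp hσx hz, MulEquiv.orderOf_eq]
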